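/- PROPOSITION (135/321 upper bound against the ex-ante optimum, edge arrival): consider the 6-vertex graph on vertices a,b,c,d,e,f whose edge set consists of the two triangles {ab, bc, ac} and {de, ef, df}, where each triangle edge independently has weight 1 with probability 1/2 and 0 otherwise, together with the nine 'big' edges joining {a,b,c} to {d,e,f}, whose weights are independent random variables equal to 15/(62ε) with probability ε and 0 otherwise, for a parameter ε > 0. The edges arrive online in the order ab, bc, ac, then de, ef, df, then the nine big edges. Then for every δ > 0 there exists ε₀ > 0 such that for all ε ∈ (0, ε₀): (i) the ex-ante optimum value of this instance is at least 321/62 − δ; and (ii) every online matching algorithm has expected total matched weight at most 135/62 + δ. Consequently, no online algorithm achieves competitive ratio better than 135/321 against the ex-ante optimum. -/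
import Mathlib


open Finset

/-- Expectation of `f` under the (finitely supported) mass function `mass`. -/
noncomputable def expOf {Ω : Type*} [Fintype Ω] (mass : Ω → ℝ) (f : Ω → ℝ) : ℝ :=
  ∑ ω, mass ω * f ω

/-- The edges of the 6-vertex instance: vertices `a,…,f` are `0,…,5`; edges `0,…,5` are
`ab, bc, ac, de, ef, df` (in this arrival order), and edges `6,…,14` are the nine
"big" edges joining `{a,b,c}` to `{d,e,f}`. -/
def ends9 : Fin 15 → Fin 6 × Fin 6 :=
  ![(0, 1), (1, 2), (0, 2), (3, 4), (4, 5), (3, 5),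
    (0, 3), (0, 4), (0, 5), (1, 3), (1, 4), (1, 5), (2, 3), (2, 4), (2, 5)]

/-- High weight of each edge: triangle edges are worth `1`, big edges `15/(62ε)`. -/
noncomputable def hi9 (ε : ℝ) (i : Fin 15) : ℝ :=
  if (i : ℕ) < 6 then 1 else 15 / (62 * ε)

/-- Probability that each edge takes its high weight: `1/2` for triangle edges, `ε` for
big edges. -/
noncomputable def q9 (ε : ℝ) (i : Fin 15) : ℝ :=
  if (i : ℕ) < 6 then 1 / 2 else ε

/-- Mass function of the random instance: every edge independently takes its high weight
with its own probability. -/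
noncomputable def mass9 (ε : ℝ) (ω : Fin 15 → Bool) : ℝ :=
  ∏ i : Fin 15, if ω i then q9 ε i else 1 - q9 ε i

/-- Realized edge weights. -/
noncomputable def w9 (ε : ℝ) (ω : Fin 15 → Bool) (i : Fin 15) : ℝ :=
  if ω i then hi9 ε i else 0

/-- The ex-ante optimum: the maximum over fractional matchings `y` of
`∑_e y_e · E[w_e | w_e in its top y_e-quantile]`.  For an edge worth `W` with probability
`q` (and `0` otherwise), `y · E[w | top y-quantile] = W · min(y, q)`. -/
noncomputable def exAnteVal9 (ε : ℝ) : ℝ :=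
  sSup {r : ℝ | ∃ y : Fin 15 → ℝ, (∀ i, 0 ≤ y i) ∧
    (∀ v : Fin 6,
      ∑ i ∈ Finset.univ.filter (fun i => (ends9 i).1 = v ∨ (ends9 i).2 = v), y i ≤ 1) ∧
    r = ∑ i, hi9 ε i * min (y i) (q9 ε i)}

/-- The selected edge set is a matching. -/
def IsMatchingSel9 (A : Finset (Fin 15)) : Prop :=
  ∀ i ∈ A, ∀ j ∈ A, i ≠ j →
    (ends9 i).1 ≠ (ends9 j).1 ∧ (ends9 i).1 ≠ (ends9 j).2 ∧
    (ends9 i).2 ≠ (ends9 j).1 ∧ (ends9 i).2 ≠ (ends9 j).2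

/-- `A` is an online algorithm for the arrival order `ord`: whether the edge arriving at
time `k` is selected depends only on the algorithm's internal randomness and the
realizations of the edges arriving at times `≤ k`. -/
def IsOnline9 (ord : Equiv.Perm (Fin 15)) {Θ : Type}
    (A : Θ → (Fin 15 → Bool) → Finset (Fin 15)) : Prop :=
  ∀ (θ : Θ) (ω ω' : Fin 15 → Bool) (k : Fin 15),
    (∀ l : Fin 15, l ≤ k → ω (ord l) = ω' (ord l)) →
    (ord k ∈ A θ ω ↔ ord k ∈ A θ ω')

/-- Expected total matched weight of the (randomized) algorithm `A` with internal
randomness distributed according to `ν`. -/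
noncomputable def algVal9 (ε : ℝ) {Θ : Type} [Fintype Θ] (ν : Θ → ℝ)
    (A : Θ → (Fin 15 → Bool) → Finset (Fin 15)) : ℝ :=
  expOf (fun q : (Fin 15 → Bool) × Θ => mass9 ε q.1 * ν q.2)
    (fun q => ∑ i ∈ A q.2 q.1, w9 ε q.1 i)

def shares9 (i j : Fin 15) : Prop :=
  (ends9 i).1 = (ends9 j).1 ∨ (ends9 i).1 = (ends9 j).2 ∨
  (ends9 i).2 = (ends9 j).1 ∨ (ends9 i).2 = (ends9 j).2

instance shares9.dec (i j : Fin 15) : Decidable (shares9 i j) := by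
  unfold shares9; infer_instance

lemma tri_shares : ∀ a b : Fin 15, (a:ℕ) < 6 → (b:ℕ) < 6 → ((a:ℕ) < 3 ↔ (b:ℕ) < 3) →
    a ≠ b → shares9 a b := by decide

lemma card_bound0 : ((univ.filter (fun i : Fin 15 => 6 ≤ (i:ℕ))).card : ℕ) = 9 := by decide

lemma card_bound1L : ∀ j : Fin 15, (j:ℕ) < 3 →
    (univ.filter (fun i : Fin 15 => 6 ≤ (i:ℕ) ∧ ¬shares9 i j)).card ≤ 3 := by decide

lemma card_bound1R : ∀ j : Fin 15, 3 ≤ (j:ℕ) → (j:ℕ) < 6 →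
    (univ.filter (fun i : Fin 15 => 6 ≤ (i:ℕ) ∧ ¬shares9 i j)).card ≤ 3 := by decide

lemma card_bound2 : ∀ j j' : Fin 15, (j:ℕ) < 3 → 3 ≤ (j':ℕ) → (j':ℕ) < 6 →
    (univ.filter (fun i : Fin 15 => 6 ≤ (i:ℕ) ∧ ¬shares9 i j ∧ ¬shares9 i j')).card ≤ 1 := by
  decide

lemma mass9_nonneg {ε : ℝ} (h0 : 0 ≤ ε) (h1 : ε ≤ 1) (ω : Fin 15 → Bool) :
    0 ≤ mass9 ε ω := by
  unfold mass9
  apply Finset.prod_nonneg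
  intro i _
  unfold q9
  split <;> split <;> norm_num <;> linarith

lemma sum_mass9 (ε : ℝ) : ∑ ω : Fin 15 → Bool, mass9 ε ω = 1 := by
  unfold mass9
  have := Finset.prod_univ_sum (fun _ : Fin 15 => (Finset.univ : Finset Bool))
    (fun i b => if b then q9 ε i else 1 - q9 ε i)
  rw [Fintype.piFinset_univ] at this
  rw [← this]
  rw [Finset.prod_eq_one]
  intro i _
  simp

lemma mass9_update (ε : ℝ) (ω : Fin 15 → Bool) (i : Fin 15) (v : Bool) :
    mass9 ε (Function.update ω i v)
      = (if v then q9 ε i else 1 - q9 ε i) *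
          ∏ j ∈ Finset.univ \ {i}, (if ω j then q9 ε j else 1 - q9 ε j) := by
  have h : (fun j => if Function.update ω i v j then q9 ε j else 1 - q9 ε j)
      = Function.update (fun j => if ω j then q9 ε j else 1 - q9 ε j) i
          (if v then q9 ε i else 1 - q9 ε i) := by
    funext j
    rcases eq_or_ne j i with rfl | hj
    · simp
    · simp [Function.update_of_ne hj]
  unfold mass9
  calc (∏ j, if Function.update ω i v j then q9 ε j else 1 - q9 ε j)
      = ∏ j, Function.update (fun j => if ω j then q9 ε j else 1 - q9 ε j) i
          (if v then q9 ε i else 1 - q9 ε i) j := by rw [h]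
    _ = _ := Finset.prod_update_of_mem (Finset.mem_univ i) _ _

lemma mass9_flip (ε : ℝ) (ω : Fin 15 → Bool) (i : Fin 15) :
    q9 ε i * mass9 ε (Function.update ω i false)
      = (1 - q9 ε i) * mass9 ε (Function.update ω i true) := by
  rw [mass9_update, mass9_update]; simp; ring

lemma extract (ε : ℝ) (i : Fin 15) (a b : ℝ) (F : (Fin 15 → Bool) → ℝ)
    (hF : ∀ ω v, F (Function.update ω i v) = F ω) :
    ∑ ω : Fin 15 → Bool, mass9 ε ω * ((if ω i then a else b) * F ω)
      = (q9 ε i * a + (1 - q9 ε i) * b) * ∑ ω : Fin 15 → Bool, mass9 ε ω * F ω := by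
  set S1 := ∑ ω : Fin 15 → Bool, (if ω i then mass9 ε ω * F ω else 0) with hS1
  set S0 := ∑ ω : Fin 15 → Bool, (if ω i then 0 else mass9 ε ω * F ω) with hS0
  have hL : ∑ ω : Fin 15 → Bool, mass9 ε ω * ((if ω i then a else b) * F ω)
      = a * S1 + b * S0 := by
    rw [hS1, hS0, Finset.mul_sum, Finset.mul_sum, ← Finset.sum_add_distrib]
    refine Finset.sum_congr rfl fun ω _ => ?_
    cases h : ω i <;> simp [h] <;> ring
  have hT : ∑ ω : Fin 15 → Bool, mass9 ε ω * F ω = S1 + S0 := by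
    rw [hS1, hS0, ← Finset.sum_add_distrib]
    refine Finset.sum_congr rfl fun ω _ => ?_
    cases h : ω i <;> simp [h]
  have hσ : Function.Bijective (fun ω : Fin 15 → Bool => Function.update ω i (!ω i)) := by
    apply Function.Involutive.bijective
    intro ω
    funext j
    rcases eq_or_ne j i with rfl | hj
    · simp
    · simp [Function.update_of_ne hj]
  have key : q9 ε i * S0 = (1 - q9 ε i) * S1 := by
    rw [hS0, hS1, Finset.mul_sum, Finset.mul_sum]
    refine Fintype.sum_bijective _ hσ _ _ ?_
    intro ω
    cases h : ω i
    · have h0 : Function.update ω i false = ω := by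
        funext j; rcases eq_or_ne j i with rfl | hj
        · simp [h]
        · simp [Function.update_of_ne hj]
      have hflip := mass9_flip ε ω i
      rw [h0] at hflip
      simp only [h, Function.update_self, Bool.not_false, if_true, if_false]
      rw [hF]
      simp only [Bool.false_eq_true, if_false]
      linear_combination F ω * hflip
    · simp [h, Function.update_self]
  rw [hL, hT]
  linear_combination (b - a) * key

section arith
private lemma arith_A (c FP Z k1 k2 : ℝ) (hc : c = 15/62)
    (hk1 : k1 = 0 ∨ k1 = 1) (hk2 : k2 = 0 ∨ k2 = 1)
    (hz0 : 0 ≤ Z) (hz1 : Z ≤ 1) (hkz : k2 ≤ Z) (hFP : FP ≤ 1) :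
    k1 + k2 + c * FP ≤ 9*c + (1 - 6*c) * k1 + (1 - 2*c) * (k1 * Z) := by
  subst hc
  rcases hk1 with h | h <;> rcases hk2 with h' | h' <;> subst h <;> subst h' <;> nlinarith

private lemma arith_B (c FP Z k1 k2 : ℝ) (hc : c = 15/62)
    (hk1 : k1 = 0 ∨ k1 = 1) (hk2 : k2 = 0)
    (hz0 : 0 ≤ Z) (hFP : FP ≤ 3) :
    k1 + k2 + c * FP ≤ 9*c + (1 - 6*c) * k1 + (1 - 2*c) * (k1 * Z) := by
  subst hc; subst hk2
  rcases hk1 with h | h <;> subst h <;> nlinarith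

private lemma arith_C (c FP Z k1 k2 : ℝ) (hc : c = 15/62)
    (hk1 : k1 = 0) (hk2 : k2 = 0 ∨ k2 = 1)
    (hz0 : 0 ≤ Z) (hFP : FP ≤ 3) :
    k1 + k2 + c * FP ≤ 9*c + (1 - 6*c) * k1 + (1 - 2*c) * (k1 * Z) := by
  subst hc; subst hk1
  rcases hk2 with h | h <;> subst h <;> nlinarith

private lemma arith_D (c FP Z k1 k2 : ℝ) (hc : c = 15/62)
    (hk1 : k1 = 0) (hk2 : k2 = 0) (hFP : FP ≤ 9) :
    k1 + k2 + c * FP ≤ 9*c + (1 - 6*c) * k1 + (1 - 2*c) * (k1 * Z) := by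
  subst hc; subst hk1; subst hk2; nlinarith
end arith

lemma det_le (ε : ℝ) (hε0 : 0 < ε) (hε1 : ε < 1)
    (B : (Fin 15 → Bool) → Finset (Fin 15))
    (hM : ∀ ω, IsMatchingSel9 (B ω))
    (hB : ∀ j : Fin 15, (j : ℕ) < 6 → ∀ ω ω' : Fin 15 → Bool,
        (∀ l : Fin 15, (l : ℕ) ≤ (j : ℕ) → ω l = ω' l) → (j ∈ B ω ↔ j ∈ B ω')) :
    ∑ ω : Fin 15 → Bool, mass9 ε ω * ∑ i ∈ B ω, w9 ε ω i ≤ 135 / 62 := by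
  classical
  have hmass : ∀ ω, 0 ≤ mass9 ε ω := fun ω => mass9_nonneg hε0.le hε1.le ω
  have hns : ∀ ω, ∀ i ∈ B ω, ∀ j ∈ B ω, i ≠ j → ¬ shares9 i j := by
    intro ω i hi j hj hij
    have h := hM ω i hi j hj hij
    simp only [shares9, not_or]
    exact ⟨h.1, h.2.1, h.2.2.1, h.2.2.2⟩
  set c : ℝ := 15 / 62 with hc
  set K1 : (Fin 15 → Bool) → ℝ :=
    fun ω => if ∃ j ∈ B ω, (j : ℕ) < 3 ∧ ω j = true then 1 else 0 with hK1
  set K2 : (Fin 15 → Bool) → ℝ :=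
    fun ω => if ∃ j ∈ B ω, 3 ≤ (j : ℕ) ∧ (j : ℕ) < 6 ∧ ω j = true then 1 else 0 with hK2
  set Fr : Fin 15 → (Fin 15 → Bool) → Prop :=
    fun i ω => ∀ j ∈ B ω, (j : ℕ) < 6 → ¬ shares9 i j with hFr
  set FI : Fin 15 → (Fin 15 → Bool) → ℝ :=
    fun i ω => if 6 ≤ (i : ℕ) ∧ Fr i ω then 1 else 0 with hFIdef
  clear_value FI K2 K1 c
  -- membership invariance
  have hBupd : ∀ (j i : Fin 15) (ω : Fin 15 → Bool) (v : Bool),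
      (j : ℕ) < 6 → (j : ℕ) < (i : ℕ) →
      (j ∈ B (Function.update ω i v) ↔ j ∈ B ω) := by
    intro j i ω v hj hji
    apply hB j hj
    intro l hl
    have hli : l ≠ i := by
      intro h
      rw [h] at hl
      omega
    exact Function.update_of_ne hli v ω
  have hK1upd : ∀ (ω : Fin 15 → Bool) (i : Fin 15) (v : Bool), 3 ≤ (i : ℕ) →
      K1 (Function.update ω i v) = K1 ω := by
    intro ω i v hi
    simp only [hK1]
    refine if_congr ?_ rfl rfl
    constructor
    · rintro ⟨j, hjB, hj3, hjω⟩
      refine ⟨j, (hBupd j i ω v (by omega) (by omega)).mp hjB, hj3, ?_⟩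
      rwa [Function.update_of_ne (Fin.ne_of_val_ne (by omega))] at hjω
    · rintro ⟨j, hjB, hj3, hjω⟩
      refine ⟨j, (hBupd j i ω v (by omega) (by omega)).mpr hjB, hj3, ?_⟩
      rw [Function.update_of_ne (Fin.ne_of_val_ne (by omega))]
      exact hjω
  have hFIupd : ∀ (i : Fin 15) (ω : Fin 15 → Bool) (v : Bool),
      FI i (Function.update ω i v) = FI i ω := by
    intro i ω v
    simp only [hFIdef]
    by_cases h6 : 6 ≤ (i:ℕ)
    · refine if_congr (and_congr_right fun _ => ?_) rfl rfl
      simp only [hFr]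
      constructor
      · intro h j hjB hj6
        exact h j ((hBupd j i ω v hj6 (by omega)).mpr hjB) hj6
      · intro h j hjB hj6
        exact h j ((hBupd j i ω v hj6 (by omega)).mp hjB) hj6
    · rw [if_neg (fun h => h6 h.1), if_neg (fun h => h6 h.1)]
  have hw_nonneg : ∀ ω i, 0 ≤ w9 ε ω i := by
    intro ω i
    unfold w9 hi9
    split
    · split
      · norm_num
      · positivity
    · exact le_refl 0
  -- pointwise value bound
  have hval : ∀ ω, ∑ i ∈ B ω, w9 ε ω i
      ≤ K1 ω + K2 ω + ∑ i : Fin 15, w9 ε ω i * FI i ω := by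
    intro ω
    rw [← Finset.sum_filter_add_sum_filter_not (B ω) (fun i => i.val < 6)]
    have hsmall : ∑ i ∈ (B ω).filter (fun i => i.val < 6), w9 ε ω i ≤ K1 ω + K2 ω := by
      have h1 : ∑ i ∈ (B ω).filter (fun i => i.val < 6), w9 ε ω i
          = ∑ i ∈ (B ω).filter (fun i => i.val < 6), (if ω i = true then (1:ℝ) else 0) := by
        refine Finset.sum_congr rfl fun i hi => ?_
        rw [Finset.mem_filter] at hi
        unfold w9 hi9
        rw [if_pos hi.2]
      rw [h1, Finset.sum_boole]
      have hsplit : ((B ω).filter (fun i => i.val < 6)).filter (fun i => ω i = true)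
          = (B ω).filter (fun i => i.val < 3 ∧ ω i = true)
            ∪ (B ω).filter (fun i => 3 ≤ i.val ∧ i.val < 6 ∧ ω i = true) := by
        ext i
        simp only [Finset.mem_filter, Finset.mem_union]
        constructor
        · rintro ⟨⟨hB', h6⟩, hω⟩
          by_cases h3 : (i:ℕ) < 3
          · exact Or.inl ⟨hB', h3, hω⟩
          · exact Or.inr ⟨hB', by omega, h6, hω⟩
        · rintro (⟨hB', h3, hω⟩ | ⟨hB', h3, h6, hω⟩)
          · exact ⟨⟨hB', by omega⟩, hω⟩
          · exact ⟨⟨hB', h6⟩, hω⟩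
      have hcard1 : ((B ω).filter (fun i => i.val < 3 ∧ ω i = true)).card ≤ 1 := by
        rw [Finset.card_le_one]
        intro a ha b hb
        rw [Finset.mem_filter] at ha hb
        by_contra hne
        exact hns ω a ha.1 b hb.1 hne
          (tri_shares a b (by omega) (by omega) (iff_of_true ha.2.1 hb.2.1) hne)
      have hcard2 : ((B ω).filter (fun i => 3 ≤ i.val ∧ i.val < 6 ∧ ω i = true)).card ≤ 1 := by
        rw [Finset.card_le_one]
        intro a ha b hb
        rw [Finset.mem_filter] at ha hb
        by_contra hne
        refine hns ω a ha.1 b hb.1 hne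
          (tri_shares a b (by omega) (by omega) ?_ hne)
        constructor <;> intro h <;> omega
      have hK1b : (((B ω).filter (fun i => i.val < 3 ∧ ω i = true)).card : ℝ) ≤ K1 ω := by
        simp only [hK1]
        by_cases hc1 : ∃ j ∈ B ω, (j:ℕ) < 3 ∧ ω j = true
        · rw [if_pos hc1]; exact_mod_cast hcard1
        · rw [if_neg hc1]
          have he : (B ω).filter (fun i => i.val < 3 ∧ ω i = true) = ∅ := by
            rw [Finset.filter_eq_empty_iff]
            intro i hi hcon
            exact hc1 ⟨i, hi, hcon⟩
          simp [he]
      have hK2b : (((B ω).filter (fun i => 3 ≤ i.val ∧ i.val < 6 ∧ ω i = true)).card : ℝ)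
          ≤ K2 ω := by
        simp only [hK2]
        by_cases hc2 : ∃ j ∈ B ω, 3 ≤ (j:ℕ) ∧ (j:ℕ) < 6 ∧ ω j = true
        · rw [if_pos hc2]; exact_mod_cast hcard2
        · rw [if_neg hc2]
          have he : (B ω).filter (fun i => 3 ≤ i.val ∧ i.val < 6 ∧ ω i = true) = ∅ := by
            rw [Finset.filter_eq_empty_iff]
            intro i hi hcon
            exact hc2 ⟨i, hi, hcon⟩
          simp [he]
      rw [hsplit]
      calc ((((B ω).filter (fun i => i.val < 3 ∧ ω i = true))
              ∪ (B ω).filter (fun i => 3 ≤ i.val ∧ i.val < 6 ∧ ω i = true)).card : ℝ)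
          ≤ (((B ω).filter (fun i => i.val < 3 ∧ ω i = true)).card : ℝ)
            + (((B ω).filter (fun i => 3 ≤ i.val ∧ i.val < 6 ∧ ω i = true)).card : ℝ) := by
            exact_mod_cast Finset.card_union_le _ _
        _ ≤ K1 ω + K2 ω := add_le_add hK1b hK2b
    have hbig : ∑ i ∈ (B ω).filter (fun i => ¬ i.val < 6), w9 ε ω i
        ≤ ∑ i : Fin 15, w9 ε ω i * FI i ω := by
      have hterm : ∀ i : Fin 15, w9 ε ω i * FI i ω
          = if 6 ≤ (i:ℕ) ∧ Fr i ω then w9 ε ω i else 0 := by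
        intro i
        simp only [hFIdef]
        split <;> simp
      rw [Finset.sum_congr rfl (fun i _ => hterm i), ← Finset.sum_filter]
      apply Finset.sum_le_sum_of_subset_of_nonneg
      · intro i hi
        rw [Finset.mem_filter] at hi
        obtain ⟨hiB, hi6⟩ := hi
        rw [Finset.mem_filter]
        refine ⟨Finset.mem_univ i, by omega, ?_⟩
        intro j hjB hj6
        exact hns ω i hiB j hjB (Fin.ne_of_val_ne (by omega))
      · intro i _ _
        exact hw_nonneg ω i
    linarith [hsmall, hbig]
  -- step 2
  have step2 : ∑ ω : Fin 15 → Bool, mass9 ε ω * ∑ i ∈ B ω, w9 ε ω i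
      ≤ ∑ ω : Fin 15 → Bool, mass9 ε ω * (K1 ω + K2 ω + c * ∑ i : Fin 15, FI i ω) := by
    have h1 : ∑ ω : Fin 15 → Bool, mass9 ε ω * ∑ i ∈ B ω, w9 ε ω i
        ≤ ∑ ω : Fin 15 → Bool, mass9 ε ω * (K1 ω + K2 ω + ∑ i : Fin 15, w9 ε ω i * FI i ω) :=
      Finset.sum_le_sum fun ω _ => mul_le_mul_of_nonneg_left (hval ω) (hmass ω)
    refine h1.trans (le_of_eq ?_)
    have e1 : ∀ ω : Fin 15 → Bool,
        mass9 ε ω * (K1 ω + K2 ω + ∑ i : Fin 15, w9 ε ω i * FI i ω)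
        = mass9 ε ω * (K1 ω + K2 ω) + ∑ i : Fin 15, mass9 ε ω * (w9 ε ω i * FI i ω) := by
      intro ω; rw [mul_add, Finset.mul_sum]
    have e2 : ∀ ω : Fin 15 → Bool,
        mass9 ε ω * (K1 ω + K2 ω + c * ∑ i : Fin 15, FI i ω)
        = mass9 ε ω * (K1 ω + K2 ω) + ∑ i : Fin 15, c * (mass9 ε ω * FI i ω) := by
      intro ω
      rw [mul_add, Finset.mul_sum, Finset.mul_sum]
      congr 1
      exact Finset.sum_congr rfl fun i _ => by ring
    rw [Finset.sum_congr rfl fun ω _ => e1 ω, Finset.sum_congr rfl fun ω _ => e2 ω,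
      Finset.sum_add_distrib, Finset.sum_add_distrib]
    congr 1
    rw [show (∑ ω : Fin 15 → Bool, ∑ i : Fin 15, mass9 ε ω * (w9 ε ω i * FI i ω))
        = ∑ i : Fin 15, ∑ ω : Fin 15 → Bool, mass9 ε ω * (w9 ε ω i * FI i ω) from
        Finset.sum_comm]
    rw [show (∑ ω : Fin 15 → Bool, ∑ i : Fin 15, c * (mass9 ε ω * FI i ω))
        = ∑ i : Fin 15, ∑ ω : Fin 15 → Bool, c * (mass9 ε ω * FI i ω) from Finset.sum_comm]
    refine Finset.sum_congr rfl fun i _ => ?_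
    have hsh : ∀ ω : Fin 15 → Bool, mass9 ε ω * (w9 ε ω i * FI i ω)
        = mass9 ε ω * ((if ω i then hi9 ε i else 0) * FI i ω) := fun ω => rfl
    rw [Finset.sum_congr rfl fun ω _ => hsh ω, extract ε i (hi9 ε i) 0 (FI i) (hFIupd i),
      ← Finset.mul_sum]
    by_cases h6 : 6 ≤ i.val
    · have hcoef : q9 ε i * hi9 ε i + (1 - q9 ε i) * 0 = c := by
        unfold q9 hi9
        rw [if_neg (by omega), if_neg (by omega), hc]
        have hne : ε ≠ 0 := ne_of_gt hε0
        field_simp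
        ring
      rw [hcoef]
    · have hz : ∀ ω : Fin 15 → Bool, FI i ω = 0 := by
        intro ω
        simp only [hFIdef]
        rw [if_neg (fun h => h6 h.1)]
      simp [hz]
  -- the Z and P3 functions
  set P3 : (Fin 15 → Bool) → ℝ := fun ω =>
    (if ω 3 then 0 else 1) * ((if ω 4 then 0 else 1) * (if ω 5 then 0 else 1)) with hP3
  set Z : (Fin 15 → Bool) → ℝ := fun ω => 1 - P3 ω with hZdef
  clear_value Z P3
  have hZ01 : ∀ ω, 0 ≤ Z ω ∧ Z ω ≤ 1 := by
    intro ω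
    simp only [hZdef, hP3]
    cases h3 : ω 3 <;> cases h4 : ω 4 <;> cases h5 : ω 5 <;> norm_num
  have hK2Z : ∀ ω, K2 ω ≤ Z ω := by
    intro ω
    simp only [hK2]
    split
    · rename_i hcond
      obtain ⟨j, hjB, hj3, hj6, hjω⟩ := hcond
      have hval3 : ω 3 = true ∨ ω 4 = true ∨ ω 5 = true := by
        have hj345 : j = (3 : Fin 15) ∨ j = 4 ∨ j = 5 := by
          have hv : j.val = 3 ∨ j.val = 4 ∨ j.val = 5 := by omega
          rcases hv with h | h | h
          · exact Or.inl (Fin.ext (by rw [h]; rfl))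
          · exact Or.inr (Or.inl (Fin.ext (by rw [h]; rfl)))
          · exact Or.inr (Or.inr (Fin.ext (by rw [h]; rfl)))
        rcases hj345 with rfl | rfl | rfl
        · exact Or.inl hjω
        · exact Or.inr (Or.inl hjω)
        · exact Or.inr (Or.inr hjω)
      simp only [hZdef, hP3]
      rcases hval3 with h | h | h <;> rw [h] <;> simp
    · have := (hZ01 ω).1
      linarith
  have hK101 : ∀ ω, K1 ω = 0 ∨ K1 ω = 1 := by
    intro ω; simp only [hK1]; split
    · exact Or.inr rfl
    · exact Or.inl rfl
  have hK201 : ∀ ω, K2 ω = 0 ∨ K2 ω = 1 := by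
    intro ω; simp only [hK2]; split
    · exact Or.inr rfl
    · exact Or.inl rfl
  -- pointwise claim
  have hP : ∀ ω : Fin 15 → Bool, K1 ω + K2 ω + c * ∑ i : Fin 15, FI i ω
      ≤ 9*c + (1 - 6*c) * K1 ω + (1 - 2*c) * (K1 ω * Z ω) := by
    intro ω
    have hsum : ∑ i : Fin 15, FI i ω
        = ((univ.filter (fun i : Fin 15 => 6 ≤ i.val ∧ Fr i ω)).card : ℝ) := by
      simp only [hFIdef]
      rw [Finset.sum_boole]
    have hz := hZ01 ω
    have hk2z := hK2Z ω
    by_cases h1 : ∃ j ∈ B ω, j.val < 3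
    · have hK1le : K1 ω ≤ 1 := by rcases hK101 ω with h | h <;> rw [h] <;> norm_num
      by_cases h2 : ∃ j ∈ B ω, 3 ≤ j.val ∧ j.val < 6
      · obtain ⟨j, hjB, hj⟩ := h1
        obtain ⟨j', hj'B, hj'⟩ := h2
        have hsub : (univ.filter (fun i : Fin 15 => 6 ≤ i.val ∧ Fr i ω))
            ⊆ univ.filter (fun i : Fin 15 => 6 ≤ (i:ℕ) ∧ ¬shares9 i j ∧ ¬shares9 i j') := by
          intro i hi
          rw [Finset.mem_filter] at hi ⊢
          exact ⟨hi.1, hi.2.1, hi.2.2 j hjB (by omega), hi.2.2 j' hj'B (by omega)⟩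
        have hcard := (Finset.card_le_card hsub).trans (card_bound2 j j' hj hj'.1 hj'.2)
        have hFP : ∑ i : Fin 15, FI i ω ≤ 1 := by
          rw [hsum]; exact_mod_cast hcard
        exact arith_A c _ (Z ω) (K1 ω) (K2 ω) hc (hK101 ω) (hK201 ω) hz.1 hz.2 hk2z hFP
      · have hK20 : K2 ω = 0 := by
          simp only [hK2]
          rw [if_neg]
          rintro ⟨j, hjB, h3, h6, -⟩
          exact h2 ⟨j, hjB, h3, h6⟩
        obtain ⟨j, hjB, hj⟩ := h1
        have hsub : (univ.filter (fun i : Fin 15 => 6 ≤ i.val ∧ Fr i ω))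
            ⊆ univ.filter (fun i : Fin 15 => 6 ≤ (i:ℕ) ∧ ¬shares9 i j) := by
          intro i hi
          rw [Finset.mem_filter] at hi ⊢
          exact ⟨hi.1, hi.2.1, hi.2.2 j hjB (by omega)⟩
        have hcard := (Finset.card_le_card hsub).trans (card_bound1L j hj)
        have hFP : ∑ i : Fin 15, FI i ω ≤ 3 := by
          rw [hsum]; exact_mod_cast hcard
        exact arith_B c _ (Z ω) (K1 ω) (K2 ω) hc (hK101 ω) hK20 hz.1 hFP
    · have hK10 : K1 ω = 0 := by
        simp only [hK1]
        rw [if_neg]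
        rintro ⟨j, hjB, h3, -⟩
        exact h1 ⟨j, hjB, h3⟩
      by_cases h2 : ∃ j ∈ B ω, 3 ≤ j.val ∧ j.val < 6
      · obtain ⟨j, hjB, hj⟩ := h2
        have hsub : (univ.filter (fun i : Fin 15 => 6 ≤ i.val ∧ Fr i ω))
            ⊆ univ.filter (fun i : Fin 15 => 6 ≤ (i:ℕ) ∧ ¬shares9 i j) := by
          intro i hi
          rw [Finset.mem_filter] at hi ⊢
          exact ⟨hi.1, hi.2.1, hi.2.2 j hjB (by omega)⟩
        have hcard := (Finset.card_le_card hsub).trans (card_bound1R j hj.1 hj.2)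
        have hFP : ∑ i : Fin 15, FI i ω ≤ 3 := by
          rw [hsum]; exact_mod_cast hcard
        exact arith_C c _ (Z ω) (K1 ω) (K2 ω) hc hK10 (hK201 ω) hz.1 hFP
      · have hK20 : K2 ω = 0 := by
          simp only [hK2]
          rw [if_neg]
          rintro ⟨j, hjB, h3, h6, -⟩
          exact h2 ⟨j, hjB, h3, h6⟩
        have hsub : (univ.filter (fun i : Fin 15 => 6 ≤ i.val ∧ Fr i ω))
            ⊆ univ.filter (fun i : Fin 15 => 6 ≤ (i:ℕ)) := by
          intro i hi
          rw [Finset.mem_filter] at hi ⊢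
          exact ⟨hi.1, hi.2.1⟩
        have hcard := Finset.card_le_card hsub
        rw [card_bound0] at hcard
        have hFP : ∑ i : Fin 15, FI i ω ≤ 9 := by
          rw [hsum]; exact_mod_cast hcard
        exact arith_D c _ (Z ω) (K1 ω) (K2 ω) hc hK10 hK20 hFP
  -- expectation of the pointwise bound
  have step3 : ∑ ω : Fin 15 → Bool, mass9 ε ω * (K1 ω + K2 ω + c * ∑ i : Fin 15, FI i ω)
      ≤ ∑ ω : Fin 15 → Bool,
          mass9 ε ω * (9*c + (1 - 6*c) * K1 ω + (1 - 2*c) * (K1 ω * Z ω)) :=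
    Finset.sum_le_sum fun ω _ => mul_le_mul_of_nonneg_left (hP ω) (hmass ω)
  have hK1nn : ∀ ω, 0 ≤ K1 ω := by
    intro ω; rcases hK101 ω with h | h <;> rw [h] <;> norm_num
  set S : ℝ := ∑ ω : Fin 15 → Bool, mass9 ε ω * K1 ω with hSdef
  have hSnn : 0 ≤ S := Finset.sum_nonneg fun ω _ => mul_nonneg (hmass ω) (hK1nn ω)
  have hq : ∀ i : Fin 15, i.val < 6 → q9 ε i = 1/2 := by
    intro i h; unfold q9; rw [if_pos h]
  -- compute ∑ mass * (K1 * P3) = S / 8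
  have hT5 : ∑ ω : Fin 15 → Bool, mass9 ε ω * (K1 ω * P3 ω)
      = (1/2) * ∑ ω : Fin 15 → Bool,
          mass9 ε ω * (K1 ω * ((if ω 3 then (0:ℝ) else 1) * (if ω 4 then (0:ℝ) else 1))) := by
    have hsh : ∀ ω : Fin 15 → Bool, mass9 ε ω * (K1 ω * P3 ω)
        = mass9 ε ω * ((if ω 5 then (0:ℝ) else 1) *
            (K1 ω * ((if ω 3 then (0:ℝ) else 1) * (if ω 4 then (0:ℝ) else 1)))) := by
      intro ω; simp only [hP3]; ring
    rw [Finset.sum_congr rfl fun ω _ => hsh ω, extract ε 5 0 1 _ ?_]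
    · rw [mul_zero, zero_add, mul_one, hq 5 (by decide)]
      norm_num
    · intro ω v
      simp only [hK1upd ω 5 v (by decide),
        Function.update_of_ne (show (3:Fin 15) ≠ 5 by decide),
        Function.update_of_ne (show (4:Fin 15) ≠ 5 by decide)]
  have hT4 : ∑ ω : Fin 15 → Bool,
        mass9 ε ω * (K1 ω * ((if ω 3 then (0:ℝ) else 1) * (if ω 4 then (0:ℝ) else 1)))
      = (1/2) * ∑ ω : Fin 15 → Bool,
          mass9 ε ω * (K1 ω * (if ω 3 then (0:ℝ) else 1)) := by
    have hsh : ∀ ω : Fin 15 → Bool,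
        mass9 ε ω * (K1 ω * ((if ω 3 then (0:ℝ) else 1) * (if ω 4 then (0:ℝ) else 1)))
        = mass9 ε ω * ((if ω 4 then (0:ℝ) else 1) *
            (K1 ω * (if ω 3 then (0:ℝ) else 1))) := by
      intro ω; ring
    rw [Finset.sum_congr rfl fun ω _ => hsh ω, extract ε 4 0 1 _ ?_]
    · rw [mul_zero, zero_add, mul_one, hq 4 (by decide)]
      norm_num
    · intro ω v
      simp only [hK1upd ω 4 v (by decide),
        Function.update_of_ne (show (3:Fin 15) ≠ 4 by decide)]
  have hT3 : ∑ ω : Fin 15 → Bool, mass9 ε ω * (K1 ω * (if ω 3 then (0:ℝ) else 1))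
      = (1/2) * S := by
    have hsh : ∀ ω : Fin 15 → Bool,
        mass9 ε ω * (K1 ω * (if ω 3 then (0:ℝ) else 1))
        = mass9 ε ω * ((if ω 3 then (0:ℝ) else 1) * K1 ω) := by
      intro ω; ring
    rw [Finset.sum_congr rfl fun ω _ => hsh ω, extract ε 3 0 1 _ ?_]
    · rw [mul_zero, zero_add, mul_one, hq 3 (by decide), hSdef]
      norm_num
    · intro ω v
      exact hK1upd ω 3 v (by decide)
  have hT : ∑ ω : Fin 15 → Bool, mass9 ε ω * (K1 ω * P3 ω) = S / 8 := by
    rw [hT5, hT4, hT3]; ring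
  -- expand the final sum
  have hexp : ∑ ω : Fin 15 → Bool,
        mass9 ε ω * (9*c + (1 - 6*c) * K1 ω + (1 - 2*c) * (K1 ω * Z ω))
      = 9*c * (∑ ω : Fin 15 → Bool, mass9 ε ω) + (1 - 6*c) * S
        + (1 - 2*c) * (S - ∑ ω : Fin 15 → Bool, mass9 ε ω * (K1 ω * P3 ω)) := by
    have hsh : ∀ ω : Fin 15 → Bool,
        mass9 ε ω * (9*c + (1 - 6*c) * K1 ω + (1 - 2*c) * (K1 ω * Z ω))
        = 9*c * mass9 ε ω + (1 - 6*c) * (mass9 ε ω * K1 ω)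
          + (1 - 2*c) * (mass9 ε ω * K1 ω - mass9 ε ω * (K1 ω * P3 ω)) := by
      intro ω; simp only [hZdef]; ring
    rw [Finset.sum_congr rfl fun ω _ => hsh ω, Finset.sum_add_distrib,
      Finset.sum_add_distrib, ← Finset.mul_sum, ← Finset.mul_sum, ← Finset.mul_sum,
      Finset.sum_sub_distrib, hSdef]
  refine step2.trans (step3.trans (le_of_eq ?_))
  rw [hexp, hT, sum_mass9, hc]
  ring

noncomputable def y9 (ε : ℝ) : Fin 15 → ℝ :=
  fun i => if (i : ℕ) < 6 then 1/2 - 3/2*ε else ε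

lemma sum_const_split (a b : ℝ) :
    ∑ i : Fin 15, (if (i:ℕ) < 6 then a else b) = 6*a + 9*b := by
  rw [Finset.sum_ite, Finset.sum_const, Finset.sum_const]
  rw [show (univ.filter (fun i : Fin 15 => (i:ℕ) < 6)).card = 6 from by decide,
    show (univ.filter (fun i : Fin 15 => ¬(i:ℕ) < 6)).card = 9 from by decide]
  push_cast
  ring

lemma cardP1 : ∀ v : Fin 6,
    (((univ.filter (fun i : Fin 15 => (ends9 i).1 = v ∨ (ends9 i).2 = v))).filter
      (fun i : Fin 15 => (i:ℕ) < 6)).card = 2 := by decide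

lemma cardP2 : ∀ v : Fin 6,
    (((univ.filter (fun i : Fin 15 => (ends9 i).1 = v ∨ (ends9 i).2 = v))).filter
      (fun i : Fin 15 => ¬(i:ℕ) < 6)).card = 3 := by decide

lemma exAnte_lower (ε : ℝ) (hε0 : 0 < ε) (hε4 : ε ≤ 1/4) :
    321/62 - 9*ε ≤ exAnteVal9 ε := by
  have hne : ε ≠ 0 := ne_of_gt hε0
  have hBdd : BddAbove {r : ℝ | ∃ y : Fin 15 → ℝ, (∀ i, 0 ≤ y i) ∧
      (∀ v : Fin 6,
        ∑ i ∈ Finset.univ.filter (fun i => (ends9 i).1 = v ∨ (ends9 i).2 = v), y i ≤ 1) ∧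
      r = ∑ i, hi9 ε i * min (y i) (q9 ε i)} := by
    refine ⟨321/62, ?_⟩
    rintro r ⟨y, hy0, hyv, rfl⟩
    have hstep : ∀ i : Fin 15, hi9 ε i * min (y i) (q9 ε i)
        ≤ (if (i:ℕ) < 6 then (1:ℝ)*(1/2) else 15/(62*ε)*ε) := by
      intro i
      unfold hi9 q9
      by_cases h : (i:ℕ) < 6 <;> simp only [h, if_true, if_false]
      · exact mul_le_mul_of_nonneg_left (min_le_right _ _) (by norm_num)
      · exact mul_le_mul_of_nonneg_left (min_le_right _ _) (by positivity)
    calc ∑ i, hi9 ε i * min (y i) (q9 ε i)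
        ≤ ∑ i : Fin 15, (if (i:ℕ) < 6 then (1:ℝ)*(1/2) else 15/(62*ε)*ε) :=
          Finset.sum_le_sum fun i _ => hstep i
      _ = 6*((1:ℝ)*(1/2)) + 9*(15/(62*ε)*ε) := sum_const_split _ _
      _ = 321/62 := by field_simp; ring
  apply le_csSup hBdd
  refine ⟨y9 ε, ?_, ?_, ?_⟩
  · intro i
    unfold y9
    split <;> linarith
  · intro v
    unfold y9
    rw [Finset.sum_ite, Finset.sum_const, Finset.sum_const, cardP1 v, cardP2 v]
    simp only [nsmul_eq_mul]
    push_cast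
    linarith
  · have hval : ∀ i : Fin 15, hi9 ε i * min (y9 ε i) (q9 ε i)
        = (if (i:ℕ) < 6 then (1:ℝ)*(1/2 - 3/2*ε) else 15/(62*ε)*ε) := by
      intro i
      unfold hi9 q9 y9
      by_cases h : (i:ℕ) < 6 <;> simp only [h, if_true, if_false]
      · rw [min_eq_left (by linarith)]
      · rw [min_self]
    rw [Finset.sum_congr rfl fun i _ => hval i, sum_const_split]
    field_simp
    ring


lemma alg_le (ε : ℝ) (hε0 : 0 < ε) (hε1 : ε < 1)
    (ord : Equiv.Perm (Fin 15)) (hord : ∀ k : Fin 15, (k : ℕ) < 6 → ord k = k)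
    (Θ : Type) [Fintype Θ] (ν : Θ → ℝ) (hν : ∀ θ, 0 ≤ ν θ) (hν1 : ∑ θ, ν θ = 1)
    (A : Θ → (Fin 15 → Bool) → Finset (Fin 15))
    (hMA : ∀ θ ω, IsMatchingSel9 (A θ ω)) (hOA : IsOnline9 ord A) :
    algVal9 ε ν A ≤ 135 / 62 := by
  have hper : ∀ θ : Θ, ∑ ω : Fin 15 → Bool, mass9 ε ω * ∑ i ∈ A θ ω, w9 ε ω i ≤ 135/62 := by
    intro θ
    apply det_le ε hε0 hε1 (A θ) (hMA θ)
    intro j hj ω ω' hagree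
    have h1 := hOA θ ω ω' j ?_
    · rwa [hord j hj] at h1
    · intro l hl
      have hlv : (l:ℕ) ≤ (j:ℕ) := hl
      rw [hord l (by omega)]
      exact hagree l hlv
  unfold algVal9 expOf
  rw [Fintype.sum_prod_type]
  have hswap : ∑ ω : Fin 15 → Bool, ∑ θ : Θ,
        mass9 ε ω * ν θ * ∑ i ∈ A θ ω, w9 ε ω i
      = ∑ θ : Θ, ν θ * ∑ ω : Fin 15 → Bool, mass9 ε ω * ∑ i ∈ A θ ω, w9 ε ω i := by
    rw [Finset.sum_comm]
    refine Finset.sum_congr rfl fun θ _ => ?_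
    rw [Finset.mul_sum]
    exact Finset.sum_congr rfl fun ω _ => by ring
  rw [hswap]
  calc ∑ θ : Θ, ν θ * ∑ ω : Fin 15 → Bool, mass9 ε ω * ∑ i ∈ A θ ω, w9 ε ω i
      ≤ ∑ θ : Θ, ν θ * (135/62) :=
        Finset.sum_le_sum fun θ _ => mul_le_mul_of_nonneg_left (hper θ) (hν θ)
    _ = 135/62 := by rw [← Finset.sum_mul, hν1, one_mul]

/-- Upper bound of `135/321` against the ex-ante optimum for matching prophet inequality
with edge arrival (Proposition 6.2 in the paper): on the 6-vertex instance above, with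
arrival order `ab, bc, ac, de, ef, df` followed by the nine big edges (in any order):
for every `δ > 0` there is `ε₀ > 0` such that for all `ε ∈ (0, ε₀)`,
(i) the ex-ante optimum is at least `321/62 - δ`, and
(ii) every online matching algorithm has expected matched weight at most `135/62 + δ`;
consequently no online algorithm achieves competitive ratio better than `135/321`
against the ex-ante optimum. -/
theorem upper_bound_ex_ante :
    (∀ δ : ℝ, 0 < δ → ∃ ε₀ : ℝ, 0 < ε₀ ∧ ∀ ε : ℝ, 0 < ε → ε < ε₀ →
      (exAnteVal9 ε ≥ 321 / 62 - δ) ∧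
      (∀ ord : Equiv.Perm (Fin 15), (∀ k : Fin 15, (k : ℕ) < 6 → ord k = k) →
        ∀ (Θ : Type) [Fintype Θ], ∀ ν : Θ → ℝ, (∀ θ, 0 ≤ ν θ) → (∑ θ, ν θ = 1) →
        ∀ A : Θ → (Fin 15 → Bool) → Finset (Fin 15),
          (∀ θ ω, IsMatchingSel9 (A θ ω)) → IsOnline9 ord A →
          algVal9 ε ν A ≤ 135 / 62 + δ)) ∧
    (∀ δ : ℝ, 0 < δ → ∃ ε₀ : ℝ, 0 < ε₀ ∧ ∀ ε : ℝ, 0 < ε → ε < ε₀ →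
      ∀ ord : Equiv.Perm (Fin 15), (∀ k : Fin 15, (k : ℕ) < 6 → ord k = k) →
      ∀ (Θ : Type) [Fintype Θ], ∀ ν : Θ → ℝ, (∀ θ, 0 ≤ ν θ) → (∑ θ, ν θ = 1) →
      ∀ A : Θ → (Fin 15 → Bool) → Finset (Fin 15),
        (∀ θ ω, IsMatchingSel9 (A θ ω)) → IsOnline9 ord A →
        algVal9 ε ν A ≤ (135 / 321 + δ) * exAnteVal9 ε) := by
  constructor
  · intro δ hδ
    refine ⟨min (1/4) (δ/9), lt_min (by norm_num) (by positivity), ?_⟩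
    intro ε hε0 hεlt
    have hε4 : ε ≤ 1/4 := le_of_lt (lt_of_lt_of_le hεlt (min_le_left _ _))
    have hεδ : ε < δ/9 := lt_of_lt_of_le hεlt (min_le_right _ _)
    constructor
    · have := exAnte_lower ε hε0 hε4
      have h9 : 9*ε < δ := by linarith
      unfold GE.ge
      linarith
    · intro ord hord Θ _ ν hν hν1 A hMA hOA
      have := alg_le ε hε0 (by linarith) ord hord Θ ν hν hν1 A hMA hOA
      linarith
  · intro δ hδ
    refine ⟨min (1/4) (δ / (9 * (1 + δ))), lt_min (by norm_num) (by positivity), ?_⟩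
    intro ε hε0 hεlt ord hord Θ _ ν hν hν1 A hMA hOA
    have hε4 : ε ≤ 1/4 := le_of_lt (lt_of_lt_of_le hεlt (min_le_left _ _))
    have halg := alg_le ε hε0 (by linarith) ord hord Θ ν hν hν1 A hMA hOA
    have hex := exAnte_lower ε hε0 hε4
    have hεb : ε < δ / (9 * (1 + δ)) := lt_of_lt_of_le hεlt (min_le_right _ _)
    have hden : (0:ℝ) < 9 * (1 + δ) := by linarith
    have h9 : ε * (9 * (1 + δ)) < δ := (lt_div_iff₀ hden).mp hεb
    have hpos : (0:ℝ) < 135/321 + δ := by linarith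
    calc algVal9 ε ν A ≤ 135/62 := halg
      _ ≤ (135/321 + δ) * (321/62 - 9*ε) := by nlinarith [h9, hε0.le, hδ.le]
      _ ≤ (135/321 + δ) * exAnteVal9 ε := mul_le_mul_of_nonneg_left hex (le_of_lt hpos)
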